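/- Consider the extended finite-horizon LTV system on [0,T] with outputs z, e_I, e_E and the matrices Q:=𝒞_Iᵀ𝒞_I, S:=𝒞_Iᵀ𝒟_I, R:=𝒟_Iᵀ𝒟_I−γ²·diag(0_{n_w}, I_{n_d}) where 𝒟_I:=[𝒟_{Iw} 𝒟_{Id}]. Suppose ε>0, γ>0, M:[0,T]→S^{n_z} is continuous, and P:[0,T]→S^{n} is continuously differentiable with, for all t∈[0,T], [[P'+𝒜ᵀP+P𝒜, Pℬ],[ℬᵀP, 0]] + [[Q,S],[Sᵀ,R]] + [𝒞_z 𝒟_z]ᵀM[𝒞_z 𝒟_z] + εI negative semidefinite. Then for all continuous inputs w, d and the trajectory x with x(0)=0, the integrated dissipation inequality holds: x(T)ᵀP(T)x(T) + ∫₀ᵀ z(t)ᵀM(t)z(t) dt + ∫₀ᵀ‖e_I(t)‖² dt ≤ (γ²−ε) ∫₀ᵀ‖d(t)‖² dt. -/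

import Mathlib

open Matrix Set

/-- The matrix appearing in the robust-performance differential LMI. -/
noncomputable def dlmiRob {ι κ σ : Type*} [Fintype ι] [Fintype κ] [Fintype σ]
    [DecidableEq ι] [DecidableEq κ]
    (P' P 𝒜 : Matrix ι ι ℝ) (ℬ : Matrix ι κ ℝ)
    (Q : Matrix ι ι ℝ) (S : Matrix ι κ ℝ) (R : Matrix κ κ ℝ)
    (Cz : Matrix σ ι ℝ) (Dz : Matrix σ κ ℝ) (M : Matrix σ σ ℝ) (ε : ℝ) :
    Matrix (ι ⊕ κ) (ι ⊕ κ) ℝ :=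
  fromBlocks (P' + 𝒜ᵀ * P + P * 𝒜) (P * ℬ) (ℬᵀ * P) 0
    + fromBlocks Q S Sᵀ R
    + (fromCols Cz Dz)ᵀ * M * (fromCols Cz Dz)
    + ε • 1

/-! Evaluated at `(x(t), w(t), d(t))`, the differential LMI says that the storage
`V(t) = x(t)ᵀ P(t) x(t)` satisfies `V' + zᵀMz + ‖e_I‖² ≤ (γ² - ε)‖d‖² - ε(‖x‖² + ‖w‖²)`.
Integrating over `[0, T]` and using `V(0) = 0` gives the claim. -/

theorem ContinuousOn.dotProduct {X R n : Type*} [TopologicalSpace X] [TopologicalSpace R]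
    [Fintype n] [Mul R] [AddCommMonoid R] [ContinuousAdd R] [ContinuousMul R]
    {s : Set X} {u v : X → n → R} (hu : ContinuousOn u s) (hv : ContinuousOn v s) :
    ContinuousOn (fun t => u t ⬝ᵥ v t) s :=
  (continuous_fst.dotProduct continuous_snd).comp_continuousOn (hu.prodMk hv)

theorem ContinuousOn.matrix_mulVec {X R m n : Type*} [TopologicalSpace X] [TopologicalSpace R]
    [Fintype n] [NonUnitalNonAssocSemiring R] [ContinuousAdd R] [ContinuousMul R]
    {s : Set X} {A : X → Matrix m n R} {u : X → n → R} (hA : ContinuousOn A s)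
    (hu : ContinuousOn u s) : ContinuousOn (fun t => A t *ᵥ u t) s :=
  (continuous_fst.matrix_mulVec continuous_snd).comp_continuousOn (hA.prodMk hu)

theorem HasDerivAt.dotProduct_mulVec {ι : Type*} [Fintype ι] {x : ℝ → ι → ℝ} {x' : ι → ℝ}
    {P : ℝ → Matrix ι ι ℝ} {P' : Matrix ι ι ℝ} {t : ℝ} (hx : HasDerivAt x x' t)
    (hP : ∀ i j, HasDerivAt (fun s => P s i j) (P' i j) t) :
    HasDerivAt (fun s => x s ⬝ᵥ (P s *ᵥ x s))
      (x' ⬝ᵥ (P t *ᵥ x t) + x t ⬝ᵥ (P' *ᵥ x t) + x t ⬝ᵥ (P t *ᵥ x')) t := by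
  have hxi := hasDerivAt_pi.1 hx
  have hsum : HasDerivAt (fun s => ∑ i, ∑ j, x s i * (P s i j * x s j))
      (∑ i, ∑ j, (x' i * (P t i j * x t j) + x t i * (P' i j * x t j + P t i j * x' j))) t :=
    .fun_sum fun i _ => .fun_sum fun j _ => (hxi i).mul ((hP i j).mul (hxi j))
  convert hsum using 1
  · simp only [dotProduct, mulVec, Finset.mul_sum]
  · simp only [dotProduct, mulVec, Finset.mul_sum, Finset.sum_add_distrib, mul_add]
    ring

section
variable {ι κw κd σ τ : Type*} [Fintype ι] [Fintype κw] [Fintype κd] [Fintype σ] [Fintype τ]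
  [DecidableEq ι] [DecidableEq κw] [DecidableEq κd]
  {P' P A : Matrix ι ι ℝ} {Bw : Matrix ι κw ℝ} {Bd : Matrix ι κd ℝ}
  {Cz : Matrix σ ι ℝ} {Dzw : Matrix σ κw ℝ} {Dzd : Matrix σ κd ℝ}
  {CI : Matrix τ ι ℝ} {DIw : Matrix τ κw ℝ} {DId : Matrix τ κd ℝ}
  {M : Matrix σ σ ℝ} {ε γ : ℝ} {x : ι → ℝ} {w : κw → ℝ} {d : κd → ℝ}

theorem sumElim_dotProduct_dlmiRob_mulVec_sumElim :
    Sum.elim x (Sum.elim w d) ⬝ᵥ (dlmiRob P' P A (fromCols Bw Bd)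
        (CIᵀ * CI) (CIᵀ * fromCols DIw DId)
        ((fromCols DIw DId)ᵀ * fromCols DIw DId - γ ^ 2 • fromBlocks 0 0 0 1)
        Cz (fromCols Dzw Dzd) M ε *ᵥ Sum.elim x (Sum.elim w d)) =
      (A *ᵥ x + Bw *ᵥ w + Bd *ᵥ d) ⬝ᵥ (P *ᵥ x) + x ⬝ᵥ (P' *ᵥ x)
        + x ⬝ᵥ (P *ᵥ (A *ᵥ x + Bw *ᵥ w + Bd *ᵥ d))
      + (Cz *ᵥ x + Dzw *ᵥ w + Dzd *ᵥ d) ⬝ᵥ (M *ᵥ (Cz *ᵥ x + Dzw *ᵥ w + Dzd *ᵥ d))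
      + (CI *ᵥ x + DIw *ᵥ w + DId *ᵥ d) ⬝ᵥ (CI *ᵥ x + DIw *ᵥ w + DId *ᵥ d)
      - γ ^ 2 * (d ⬝ᵥ d) + ε * (x ⬝ᵥ x + w ⬝ᵥ w + d ⬝ᵥ d) := by
  simp only [dlmiRob, add_mulVec, sub_mulVec, smul_mulVec, one_mulVec, fromBlocks_mulVec,
    fromCols_mulVec_sumElim, ← mulVec_mulVec, transpose_fromCols, fromRows_mulVec,
    zero_mulVec, dotProduct_add, sumElim_dotProduct_sumElim, dotProduct_sub, dotProduct_smul,
    dotProduct_transpose_mulVec, mulVec_add, add_dotProduct, dotProduct_zero, smul_eq_mul,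
    Sum.elim_comp_inl, Sum.elim_comp_inr]
  simp only [dotProduct_comm (P *ᵥ x), dotProduct_comm (M *ᵥ _), dotProduct_comm (CI *ᵥ x)]
  ring

theorem dissipation_of_dlmiRob_nonpos (hε : 0 ≤ ε)
    (h : Sum.elim x (Sum.elim w d) ⬝ᵥ (dlmiRob P' P A (fromCols Bw Bd)
        (CIᵀ * CI) (CIᵀ * fromCols DIw DId)
        ((fromCols DIw DId)ᵀ * fromCols DIw DId - γ ^ 2 • fromBlocks 0 0 0 1)
        Cz (fromCols Dzw Dzd) M ε *ᵥ Sum.elim x (Sum.elim w d)) ≤ 0) :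
    (A *ᵥ x + Bw *ᵥ w + Bd *ᵥ d) ⬝ᵥ (P *ᵥ x) + x ⬝ᵥ (P' *ᵥ x)
        + x ⬝ᵥ (P *ᵥ (A *ᵥ x + Bw *ᵥ w + Bd *ᵥ d))
      + ((Cz *ᵥ x + Dzw *ᵥ w + Dzd *ᵥ d) ⬝ᵥ (M *ᵥ (Cz *ᵥ x + Dzw *ᵥ w + Dzd *ᵥ d))
        + (CI *ᵥ x + DIw *ᵥ w + DId *ᵥ d) ⬝ᵥ (CI *ᵥ x + DIw *ᵥ w + DId *ᵥ d))
      ≤ (γ ^ 2 - ε) * (d ⬝ᵥ d) := by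
  rw [sumElim_dotProduct_dlmiRob_mulVec_sumElim] at h
  have hx : 0 ≤ x ⬝ᵥ x := Fintype.sum_nonneg fun i => mul_self_nonneg (x i)
  have hw : 0 ≤ w ⬝ᵥ w := Fintype.sum_nonneg fun i => mul_self_nonneg (w i)
  linarith [mul_nonneg hε hx, mul_nonneg hε hw]

end

theorem add_integral_le_integral_of_hasDerivAt_add_le {V W f g : ℝ → ℝ} {a b : ℝ} (hab : a ≤ b)
    (hV : ∀ t ∈ Icc a b, HasDerivAt V (W t) t) (hW : IntervalIntegrable W MeasureTheory.volume a b)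
    (hf : IntervalIntegrable f MeasureTheory.volume a b)
    (hg : IntervalIntegrable g MeasureTheory.volume a b) (h : ∀ t ∈ Icc a b, W t + f t ≤ g t) :
    V b - V a + ∫ t in a..b, f t ≤ ∫ t in a..b, g t := by
  have hftc : ∫ t in a..b, W t = V b - V a :=
    intervalIntegral.integral_eq_sub_of_hasDerivAt (fun t ht => hV t (uIcc_of_le hab ▸ ht)) hW
  rw [← hftc, ← intervalIntegral.integral_add hW hf]
  exact intervalIntegral.integral_mono_on hab (hW.add hf) hg h

theorem dlmi_implies_integrated_dissipation_general
    {n nw nd nz nI : ℕ} {T : ℝ} (hT : 0 < T)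
    (𝒜 : ℝ → Matrix (Fin n) (Fin n) ℝ)
    (Bw : ℝ → Matrix (Fin n) (Fin nw) ℝ)
    (Bd : ℝ → Matrix (Fin n) (Fin nd) ℝ)
    (Cz : ℝ → Matrix (Fin nz) (Fin n) ℝ)
    (Dzw : ℝ → Matrix (Fin nz) (Fin nw) ℝ)
    (Dzd : ℝ → Matrix (Fin nz) (Fin nd) ℝ)
    (CI : ℝ → Matrix (Fin nI) (Fin n) ℝ)
    (DIw : ℝ → Matrix (Fin nI) (Fin nw) ℝ)
    (DId : ℝ → Matrix (Fin nI) (Fin nd) ℝ)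
    (h𝒜 : ∀ i j, ContinuousOn (fun t => 𝒜 t i j) (Icc 0 T))
    (hBw : ∀ i j, ContinuousOn (fun t => Bw t i j) (Icc 0 T))
    (hBd : ∀ i j, ContinuousOn (fun t => Bd t i j) (Icc 0 T))
    (hCz : ∀ i j, ContinuousOn (fun t => Cz t i j) (Icc 0 T))
    (hDzw : ∀ i j, ContinuousOn (fun t => Dzw t i j) (Icc 0 T))
    (hDzd : ∀ i j, ContinuousOn (fun t => Dzd t i j) (Icc 0 T))
    (hCI : ∀ i j, ContinuousOn (fun t => CI t i j) (Icc 0 T))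
    (hDIw : ∀ i j, ContinuousOn (fun t => DIw t i j) (Icc 0 T))
    (hDId : ∀ i j, ContinuousOn (fun t => DId t i j) (Icc 0 T))
    (M : ℝ → Matrix (Fin nz) (Fin nz) ℝ)
    (hMcont : ∀ i j, ContinuousOn (fun t => M t i j) (Icc 0 T))
    (ε γ : ℝ) (hε : 0 < ε)
    (P P' : ℝ → Matrix (Fin n) (Fin n) ℝ)
    (hPderiv : ∀ t ∈ Icc (0:ℝ) T, ∀ i j, HasDerivAt (fun s => P s i j) (P' t i j) t)
    (hP'cont : ∀ i j, ContinuousOn (fun t => P' t i j) (Icc 0 T))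
    (hDLMI : ∀ t ∈ Icc (0:ℝ) T, ∀ v : (Fin n ⊕ (Fin nw ⊕ Fin nd)) → ℝ,
      v ⬝ᵥ ((dlmiRob (P' t) (P t) (𝒜 t) (fromCols (Bw t) (Bd t))
        ((CI t)ᵀ * CI t)
        ((CI t)ᵀ * fromCols (DIw t) (DId t))
        ((fromCols (DIw t) (DId t))ᵀ * fromCols (DIw t) (DId t) -
          γ ^ 2 • fromBlocks (0 : Matrix (Fin nw) (Fin nw) ℝ) 0 0
            (1 : Matrix (Fin nd) (Fin nd) ℝ))
        (Cz t) (fromCols (Dzw t) (Dzd t)) (M t) ε) *ᵥ v) ≤ 0) :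
    ∀ (w : ℝ → Fin nw → ℝ) (d : ℝ → Fin nd → ℝ) (x : ℝ → Fin n → ℝ),
      (∀ i, ContinuousOn (fun t => w t i) (Icc 0 T)) →
      (∀ i, ContinuousOn (fun t => d t i) (Icc 0 T)) →
      x 0 = 0 →
      (∀ t ∈ Icc (0:ℝ) T, ∀ i,
        HasDerivAt (fun s => x s i)
          ((𝒜 t *ᵥ x t + Bw t *ᵥ w t + Bd t *ᵥ d t) i) t) →
      (x T) ⬝ᵥ (P T *ᵥ x T) +
        (∫ t in (0:ℝ)..T,
          (Cz t *ᵥ x t + Dzw t *ᵥ w t + Dzd t *ᵥ d t) ⬝ᵥ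
            (M t *ᵥ (Cz t *ᵥ x t + Dzw t *ᵥ w t + Dzd t *ᵥ d t))) +
        (∫ t in (0:ℝ)..T,
          (CI t *ᵥ x t + DIw t *ᵥ w t + DId t *ᵥ d t) ⬝ᵥ
            (CI t *ᵥ x t + DIw t *ᵥ w t + DId t *ᵥ d t)) ≤
      (γ ^ 2 - ε) * ∫ t in (0:ℝ)..T, (d t) ⬝ᵥ (d t) := by
  intro w d x hw hd hx0 hx'
  set I := Icc (0:ℝ) T
  have entrywise {m k : ℕ} {A : ℝ → Matrix (Fin m) (Fin k) ℝ}
      (h : ∀ i j, ContinuousOn (fun t => A t i j) I) : ContinuousOn A I :=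
    continuousOn_pi.2 fun i => continuousOn_pi.2 (h i)
  have hxd : ∀ t ∈ I, HasDerivAt x (𝒜 t *ᵥ x t + Bw t *ᵥ w t + Bd t *ᵥ d t) t :=
    fun t ht => hasDerivAt_pi.2 (hx' t ht)
  have hxc : ContinuousOn x I := fun t ht => (hxd t ht).continuousAt.continuousWithinAt
  have hwc := continuousOn_pi.2 hw
  have hdc := continuousOn_pi.2 hd
  have hPc : ContinuousOn P I :=
    entrywise fun i j t ht => (hPderiv t ht i j).continuousAt.continuousWithinAt
  have linear {m : ℕ} {C : ℝ → Matrix (Fin m) (Fin n) ℝ} {Dw : ℝ → Matrix (Fin m) (Fin nw) ℝ}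
      {Dd : ℝ → Matrix (Fin m) (Fin nd) ℝ} (hC : ∀ i j, ContinuousOn (fun t => C t i j) I)
      (hDw : ∀ i j, ContinuousOn (fun t => Dw t i j) I)
      (hDd : ∀ i j, ContinuousOn (fun t => Dd t i j) I) :
      ContinuousOn (fun t => C t *ᵥ x t + Dw t *ᵥ w t + Dd t *ᵥ d t) I :=
    (((entrywise hC).matrix_mulVec hxc).fun_add ((entrywise hDw).matrix_mulVec hwc)).fun_add
      ((entrywise hDd).matrix_mulVec hdc)
  have hx'c := linear h𝒜 hBw hBd
  have hWc := ((hx'c.dotProduct (hPc.matrix_mulVec hxc)).fun_add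
    (hxc.dotProduct ((entrywise hP'cont).matrix_mulVec hxc))).fun_add
    (hxc.dotProduct (hPc.matrix_mulVec hx'c))
  have hzMz := (linear hCz hDzw hDzd).dotProduct
    ((entrywise hMcont).matrix_mulVec (linear hCz hDzw hDzd))
  have hee := (linear hCI hDIw hDId).dotProduct (linear hCI hDIw hDId)
  have hdiss := add_integral_le_integral_of_hasDerivAt_add_le hT.le
    (fun t ht => (hxd t ht).dotProduct_mulVec (hPderiv t ht)) (hWc.intervalIntegrable_of_Icc hT.le)
    ((hzMz.fun_add hee).intervalIntegrable_of_Icc hT.le)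
    ((hdc.dotProduct hdc).intervalIntegrable_of_Icc hT.le |>.const_mul (γ ^ 2 - ε))
    (fun t ht => dissipation_of_dlmiRob_nonpos hε.le (hDLMI t ht _))
  rw [intervalIntegral.integral_add (hzMz.intervalIntegrable_of_Icc hT.le)
    (hee.intervalIntegrable_of_Icc hT.le), intervalIntegral.integral_const_mul] at hdiss
  simpa only [hx0, zero_dotProduct, sub_zero, add_assoc] using hdiss

/-- integrating the dissipation inequality given by the differential LMI
yields `x(T)ᵀP(T)x(T) + ∫ zᵀMz + ∫‖e_I‖² ≤ (γ²-ε)∫‖d‖²` for trajectories with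
`x(0)=0`. -/
theorem dlmi_implies_integrated_dissipation
    {n nw nd nz nI nE : ℕ} {T : ℝ} (hT : 0 < T)
    (𝒜 : ℝ → Matrix (Fin n) (Fin n) ℝ)
    (Bw : ℝ → Matrix (Fin n) (Fin nw) ℝ)
    (Bd : ℝ → Matrix (Fin n) (Fin nd) ℝ)
    (Cz : ℝ → Matrix (Fin nz) (Fin n) ℝ)
    (Dzw : ℝ → Matrix (Fin nz) (Fin nw) ℝ)
    (Dzd : ℝ → Matrix (Fin nz) (Fin nd) ℝ)
    (CI : ℝ → Matrix (Fin nI) (Fin n) ℝ)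
    (DIw : ℝ → Matrix (Fin nI) (Fin nw) ℝ)
    (DId : ℝ → Matrix (Fin nI) (Fin nd) ℝ)
    (CE : ℝ → Matrix (Fin nE) (Fin n) ℝ)
    (h𝒜 : ∀ i j, ContinuousOn (fun t => 𝒜 t i j) (Icc 0 T))
    (hBw : ∀ i j, ContinuousOn (fun t => Bw t i j) (Icc 0 T))
    (hBd : ∀ i j, ContinuousOn (fun t => Bd t i j) (Icc 0 T))
    (hCz : ∀ i j, ContinuousOn (fun t => Cz t i j) (Icc 0 T))
    (hDzw : ∀ i j, ContinuousOn (fun t => Dzw t i j) (Icc 0 T))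
    (hDzd : ∀ i j, ContinuousOn (fun t => Dzd t i j) (Icc 0 T))
    (hCI : ∀ i j, ContinuousOn (fun t => CI t i j) (Icc 0 T))
    (hDIw : ∀ i j, ContinuousOn (fun t => DIw t i j) (Icc 0 T))
    (hDId : ∀ i j, ContinuousOn (fun t => DId t i j) (Icc 0 T))
    (hCE : ∀ i j, ContinuousOn (fun t => CE t i j) (Icc 0 T))
    (M : ℝ → Matrix (Fin nz) (Fin nz) ℝ)
    (hMsym : ∀ t ∈ Icc (0:ℝ) T, (M t)ᵀ = M t)
    (hMcont : ∀ i j, ContinuousOn (fun t => M t i j) (Icc 0 T))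
    (ε γ : ℝ) (hε : 0 < ε) (hγ : 0 < γ)
    (P P' : ℝ → Matrix (Fin n) (Fin n) ℝ)
    (hPsym : ∀ t ∈ Icc (0:ℝ) T, (P t)ᵀ = P t)
    (hPderiv : ∀ t ∈ Icc (0:ℝ) T, ∀ i j, HasDerivAt (fun s => P s i j) (P' t i j) t)
    (hP'cont : ∀ i j, ContinuousOn (fun t => P' t i j) (Icc 0 T))
    (hDLMI : ∀ t ∈ Icc (0:ℝ) T, ∀ v : (Fin n ⊕ (Fin nw ⊕ Fin nd)) → ℝ,
      v ⬝ᵥ ((dlmiRob (P' t) (P t) (𝒜 t) (fromCols (Bw t) (Bd t))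
        ((CI t)ᵀ * CI t)
        ((CI t)ᵀ * fromCols (DIw t) (DId t))
        ((fromCols (DIw t) (DId t))ᵀ * fromCols (DIw t) (DId t) -
          γ ^ 2 • fromBlocks (0 : Matrix (Fin nw) (Fin nw) ℝ) 0 0
            (1 : Matrix (Fin nd) (Fin nd) ℝ))
        (Cz t) (fromCols (Dzw t) (Dzd t)) (M t) ε) *ᵥ v) ≤ 0) :
    ∀ (w : ℝ → Fin nw → ℝ) (d : ℝ → Fin nd → ℝ) (x : ℝ → Fin n → ℝ),
      (∀ i, ContinuousOn (fun t => w t i) (Icc 0 T)) →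
      (∀ i, ContinuousOn (fun t => d t i) (Icc 0 T)) →
      x 0 = 0 →
      (∀ t ∈ Icc (0:ℝ) T, ∀ i,
        HasDerivAt (fun s => x s i)
          ((𝒜 t *ᵥ x t + Bw t *ᵥ w t + Bd t *ᵥ d t) i) t) →
      (x T) ⬝ᵥ (P T *ᵥ x T) +
        (∫ t in (0:ℝ)..T,
          (Cz t *ᵥ x t + Dzw t *ᵥ w t + Dzd t *ᵥ d t) ⬝ᵥ
            (M t *ᵥ (Cz t *ᵥ x t + Dzw t *ᵥ w t + Dzd t *ᵥ d t))) +
        (∫ t in (0:ℝ)..T,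
          (CI t *ᵥ x t + DIw t *ᵥ w t + DId t *ᵥ d t) ⬝ᵥ
            (CI t *ᵥ x t + DIw t *ᵥ w t + DId t *ᵥ d t)) ≤
      (γ ^ 2 - ε) * ∫ t in (0:ℝ)..T, (d t) ⬝ᵥ (d t) :=
  dlmi_implies_integrated_dissipation_general hT 𝒜 Bw Bd Cz Dzw Dzd CI DIw DId h𝒜 hBw hBd hCz hDzw
    hDzd hCI hDIw hDId M hMcont ε γ hε P P' hPderiv hP'cont hDLMI
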